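/- arXiv:2005.00886 — 5 statements merged into one kernel-verified Lean document; each statement's English description precedes it below -/
import Mathlib

section
/- Suppose all requests in R have the same type z and every node d satisfies A_d^{z→t} = 0 for all t ≠ z (no cross-type collateral consumption). Then an admission vector y : R → {0,1} extends to an ESP-feasible pair (y,σ) if and only if for every cluster k ∈ K, Σ_{r∈R} τ_{r,k}·y_r ≤ Σ_{d∈D_k} ρ_d^z. Consequently, the ESP optimal value equals the maximum of Σ_{r∈R} v_r·y_r over y : R → {0,1} satisfying Σ_{r∈R} τ_{r,k}·y_r ≤ Σ_{d∈D_k} ρ_d^z for every cluster k. -/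
/-!
With a single request type and no cross-type collateral, the only binding capacity on a node
is its own type-`z` capacity, so the requests of a cluster compete for one shared pool: the
cluster's total type-`z` capacity. Summing the allocation over the nodes of a cluster shows that
the pool must cover the admitted demand; conversely, splitting every admitted demand among the
nodes of its cluster in proportion to their capacities fills each node at most to capacity.
The two optimisation problems therefore have the same feasible admission vectors.
-/

open Finset

section Split

variable {R D : Type*} [Fintype R]

theorem sum_le_sum_of_split {s : Finset D} {a : R → ℝ} {c : D → ℝ} {σ : R → D → ℝ}
    (hsum : ∀ r, ∑ d ∈ s, σ r d = a r) (hcap : ∀ d ∈ s, ∑ r, σ r d ≤ c d) :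
    ∑ r, a r ≤ ∑ d ∈ s, c d :=
  calc ∑ r, a r = ∑ d ∈ s, ∑ r, σ r d := by rw [Finset.sum_comm]; simp only [hsum]
    _ ≤ ∑ d ∈ s, c d := Finset.sum_le_sum hcap

theorem exists_split_of_sum_le {s : Finset D} {a : R → ℝ} {c : D → ℝ}
    (ha : ∀ r, 0 ≤ a r) (hc : ∀ d, 0 ≤ c d) (hle : ∑ r, a r ≤ ∑ d ∈ s, c d) :
    ∃ σ : R → D → ℝ, (∀ r d, 0 ≤ σ r d) ∧ (∀ r, ∑ d ∈ s, σ r d = a r) ∧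
      ∀ d ∈ s, ∑ r, σ r d ≤ c d := by
  set C := ∑ d ∈ s, c d
  have hC : 0 ≤ C := Finset.sum_nonneg fun d _ => hc d
  -- When `C = 0` all demands vanish, and the junk value `x / 0 = 0` yields the zero split.
  refine ⟨fun r d => a r * c d / C, fun r d => by have := ha r; have := hc d; positivity,
    fun r => ?_, fun d _ => ?_⟩
  · rw [← Finset.sum_div, ← Finset.mul_sum]
    rcases eq_or_ne C 0 with hC0 | hC0
    · have : a r ≤ ∑ r, a r := Finset.single_le_sum (fun r _ => ha r) (mem_univ r)
      have : a r = 0 := by linarith [ha r]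
      simp [this]
    · exact mul_div_cancel_right₀ (a r) hC0
  · rw [← Finset.sum_div, ← Finset.sum_mul]
    exact div_le_of_le_mul₀ hC (hc d)
      ((mul_le_mul_of_nonneg_right hle (hc d)).trans_eq (mul_comm _ _))

variable {K : Type*} [DecidableEq K] [Fintype D]

theorem exists_clusterwise_split_iff (cl : D → K) {a : R → K → ℝ} {c : D → ℝ}
    (ha : ∀ r k, 0 ≤ a r k) (hc : ∀ d, 0 ≤ c d) :
    (∃ σ : R → D → ℝ, (∀ r d, 0 ≤ σ r d) ∧
        (∀ r k, ∑ d ∈ univ.filter (fun d => cl d = k), σ r d = a r k) ∧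
        ∀ k, ∀ d ∈ univ.filter (fun d => cl d = k), ∑ r, σ r d ≤ c d) ↔
      ∀ k, ∑ r, a r k ≤ ∑ d ∈ univ.filter (fun d => cl d = k), c d := by
  constructor
  · rintro ⟨σ, -, hsum, hcap⟩ k
    exact sum_le_sum_of_split (hsum · k) (hcap k)
  · intro hle
    choose σ hσ0 hsum hcap using fun k => exists_split_of_sum_le (ha · k) hc (hle k)
    refine ⟨fun r d => σ (cl d) r d, fun r d => hσ0 _ r d, fun r k => ?_, fun k d hd => ?_⟩
    · rw [← hsum k r]
      exact Finset.sum_congr rfl fun d hd => by dsimp only; rw [(mem_filter.1 hd).2]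
    · obtain rfl := (mem_filter.1 hd).2
      exact hcap _ d hd

end Split

theorem forall_sum_collateral_le_iff {T R : Type*} [Fintype R] {zr : R → T} {A : T → T → ℝ}
    {ρ : T → ℝ} {z : T} (hz : ∀ r, zr r = z) (hAdiag : A z z = 1)
    (hnc : ∀ t, t ≠ z → A z t = 0) (hρ : ∀ t, 0 ≤ ρ t) (x : R → ℝ) :
    (∀ t, ∑ r, A (zr r) t * x r ≤ ρ t) ↔ ∑ r, x r ≤ ρ z := by
  simp only [hz]
  refine ⟨fun h => by simpa [hAdiag] using h z, fun h t => ?_⟩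
  rcases eq_or_ne t z with rfl | ht
  · simpa [hAdiag] using h
  · simpa [hnc t ht] using hρ t

theorem esp_single_type_no_coupling_general
    {K D T R : Type*} [Fintype D] [Fintype R]
    [DecidableEq K]
    (cl : D → K) (zr : R → T)
    (A : D → T → T → ℝ) (ρ : D → T → ℝ) (τ : R → K → ℝ) (v : R → ℝ)
    (hρ : ∀ d z, 0 ≤ ρ d z)
    (hAdiag : ∀ d z, A d z z = 1) (hτ : ∀ r k, 0 ≤ τ r k)
    (z : T) (hz : ∀ r, zr r = z)
    (hnc : ∀ d t, t ≠ z → A d z t = 0) :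
    (∀ y : R → ℝ, (∀ r, y r = 0 ∨ y r = 1) →
      ((∃ σ : R → D → ℝ,
          (∀ r d, 0 ≤ σ r d) ∧
          (∀ r k, ∑ d ∈ univ.filter (fun d => cl d = k), σ r d = τ r k * y r) ∧
          (∀ t k, ∀ d ∈ univ.filter (fun d => cl d = k),
            ∑ r, A d (zr r) t * σ r d ≤ ρ d t))
        ↔ (∀ k, ∑ r, τ r k * y r ≤ ∑ d ∈ univ.filter (fun d => cl d = k), ρ d z)))
    ∧
    sSup {u : ℝ | ∃ (y : R → ℝ) (σ : R → D → ℝ),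
        (∀ r, y r = 0 ∨ y r = 1) ∧ (∀ r d, 0 ≤ σ r d) ∧
        (∀ r k, ∑ d ∈ univ.filter (fun d => cl d = k), σ r d = τ r k * y r) ∧
        (∀ t k, ∀ d ∈ univ.filter (fun d => cl d = k),
          ∑ r, A d (zr r) t * σ r d ≤ ρ d t) ∧
        u = ∑ r, v r * y r}
      = sSup {u : ℝ | ∃ y : R → ℝ,
        (∀ r, y r = 0 ∨ y r = 1) ∧
        (∀ k, ∑ r, τ r k * y r ≤ ∑ d ∈ univ.filter (fun d => cl d = k), ρ d z) ∧
        u = ∑ r, v r * y r} := by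
  have hcap (σ : R → D → ℝ) :
      (∀ t k, ∀ d ∈ univ.filter (fun d => cl d = k),
          ∑ r, A d (zr r) t * σ r d ≤ ρ d t) ↔
        ∀ k, ∀ d ∈ univ.filter (fun d => cl d = k), ∑ r, σ r d ≤ ρ d z := by
    have hnode (d : D) :=
      forall_sum_collateral_le_iff hz (hAdiag d z) (hnc d) (hρ d) (σ · d)
    exact ⟨fun h k d hd => (hnode d).1 (h · k d hd),
      fun h t k d hd => (hnode d).2 (h k d hd) t⟩
  refine (and_iff_left_of_imp fun hfeas => ?_).2 fun y hy => ?_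
  · refine congrArg sSup (Set.ext fun u => ⟨?_, ?_⟩)
    · rintro ⟨y, σ, hy, hσ0, hsum, hσcap, rfl⟩
      exact ⟨y, hy, (hfeas y hy).1 ⟨σ, hσ0, hsum, hσcap⟩, rfl⟩
    · rintro ⟨y, hy, hle, rfl⟩
      obtain ⟨σ, hσ0, hsum, hσcap⟩ := (hfeas y hy).2 hle
      exact ⟨y, σ, hy, hσ0, hsum, hσcap, rfl⟩
  · simp only [hcap]
    refine exists_clusterwise_split_iff cl (fun r k => mul_nonneg (hτ r k) ?_) (hρ · z)
    rcases hy r with h | h <;> simp [h]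

/-- ESP with a single request type `z` and no cross-type collateral
consumption: a binary admission vector `y` extends to an ESP-feasible
allocation iff, in every cluster, the total admitted demand does not exceed
the total type-`z` capacity of the cluster; consequently the ESP optimal
value equals the optimum of the corresponding 0-1 knapsack-type program. -/
theorem esp_single_type_no_coupling
    {K D T R : Type*} [Fintype K] [Fintype D] [Fintype T] [Fintype R]
    [DecidableEq K]
    (cl : D → K) (zr : R → T)
    (A : D → T → T → ℝ) (ρ : D → T → ℝ) (τ : R → K → ℝ) (v : R → ℝ)
    (hρ : ∀ d z, 0 ≤ ρ d z) (hA : ∀ d t z, 0 ≤ A d t z)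
    (hAdiag : ∀ d z, A d z z = 1) (hτ : ∀ r k, 0 ≤ τ r k) (hv : ∀ r, 0 < v r)
    (z : T) (hz : ∀ r, zr r = z)
    (hnc : ∀ d t, t ≠ z → A d z t = 0) :
    (∀ y : R → ℝ, (∀ r, y r = 0 ∨ y r = 1) →
      ((∃ σ : R → D → ℝ,
          (∀ r d, 0 ≤ σ r d) ∧
          (∀ r k, ∑ d ∈ univ.filter (fun d => cl d = k), σ r d = τ r k * y r) ∧
          (∀ t k, ∀ d ∈ univ.filter (fun d => cl d = k),
            ∑ r, A d (zr r) t * σ r d ≤ ρ d t))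
        ↔ (∀ k, ∑ r, τ r k * y r ≤ ∑ d ∈ univ.filter (fun d => cl d = k), ρ d z)))
    ∧
    sSup {u : ℝ | ∃ (y : R → ℝ) (σ : R → D → ℝ),
        (∀ r, y r = 0 ∨ y r = 1) ∧ (∀ r d, 0 ≤ σ r d) ∧
        (∀ r k, ∑ d ∈ univ.filter (fun d => cl d = k), σ r d = τ r k * y r) ∧
        (∀ t k, ∀ d ∈ univ.filter (fun d => cl d = k),
          ∑ r, A d (zr r) t * σ r d ≤ ρ d t) ∧
        u = ∑ r, v r * y r}
      = sSup {u : ℝ | ∃ y : R → ℝ,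
        (∀ r, y r = 0 ∨ y r = 1) ∧
        (∀ k, ∑ r, τ r k * y r ≤ ∑ d ∈ univ.filter (fun d => cl d = k), ρ d z) ∧
        u = ∑ r, v r * y r} :=
  esp_single_type_no_coupling_general cl zr A ρ τ v hρ hAdiag hτ z hz hnc
end

section
/- In the instance of ESP constructed in the proof of Theorem 1 (Theorem 1's reduction), namely with a single cluster k (K = {k}), all requests of the same type z, unit values v_r = 1, and A_d^{z→t} = 0 for all t ≠ z on every node, the ESP optimal value equals the optimal value of the splittable multiple knapsack problem: it equals the maximum cardinality of a subset S ⊆ R with Σ_{r∈S} τ_{r,k} ≤ Σ_{d∈D_k} ρ_d^z; moreover this maximum cardinality is attained by admitting requests greedily in nondecreasing order of demand τ_{r,k}. -/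
/-!
With one resource type and no collateral consumption, the capacity constraints of ESP reduce to
`∑ r, σ r d ≤ ρ d z`. A set `S` of admitted requests can then be served iff its demands can be
split among the nodes within their capacities, and splitting every demand proportionally to the
capacities shows that this happens iff `∑ r ∈ S, τ r ≤ ∑ d, ρ d z`. So the ESP values are exactly
the cardinalities of the knapsack-feasible sets. For the greedy rule: the `j`-th smallest element
of a `k`-element subset of `Fin n` is at least `j`, so the `k` smallest demands weigh at most as
much as any `k` demands.
-/

open Finset

section Split

variable {ι κ : Type*} [Fintype ι] [Fintype κ]

theorem sum_le_sum_of_split_s2 {β : Type*} [AddCommMonoid β] [PartialOrder β] [IsOrderedAddMonoid β]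
    {w : ι → β} {c : κ → β} {σ : ι → κ → β}
    (hrow : ∀ i, ∑ j, σ i j = w i) (hcol : ∀ j, ∑ i, σ i j ≤ c j) :
    ∑ i, w i ≤ ∑ j, c j :=
  calc ∑ i, w i = ∑ j, ∑ i, σ i j := by simp only [← hrow]; exact sum_comm
    _ ≤ ∑ j, c j := sum_le_sum fun j _ => hcol j

theorem exists_split_iff_sum_le {𝕜 : Type*} [Field 𝕜] [LinearOrder 𝕜] [IsStrictOrderedRing 𝕜]
    {w : ι → 𝕜} {c : κ → 𝕜} (hw : ∀ i, 0 ≤ w i) (hc : ∀ j, 0 ≤ c j) :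
    (∃ σ : ι → κ → 𝕜, (∀ i j, 0 ≤ σ i j) ∧ (∀ i, ∑ j, σ i j = w i) ∧ ∀ j, ∑ i, σ i j ≤ c j) ↔
      ∑ i, w i ≤ ∑ j, c j := by
  refine ⟨fun ⟨σ, _, hrow, hcol⟩ => sum_le_sum_of_split_s2 hrow hcol, fun h => ?_⟩
  set C := ∑ j, c j
  have hC0 : 0 ≤ C := sum_nonneg fun j _ => hc j
  by_cases hC : C = 0
  · have hw0 : ∀ i, w i = 0 := fun i =>
      (sum_eq_zero_iff_of_nonneg fun i _ => hw i).1
        (le_antisymm (h.trans_eq hC) (sum_nonneg fun i _ => hw i)) i (mem_univ i)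
    exact ⟨0, fun _ _ => le_rfl, fun i => by simp [hw0], fun j => by simpa using hc j⟩
  refine ⟨fun i j => w i * (c j / C), fun i j => ?_, fun i => ?_, fun j => ?_⟩
  · exact mul_nonneg (hw i) (div_nonneg (hc j) hC0)
  · rw [← mul_sum, ← sum_div, div_self hC, mul_one]
  · calc ∑ i, w i * (c j / C) = (∑ i, w i) * (c j / C) := (sum_mul ..).symm
      _ ≤ C * (c j / C) := mul_le_mul_of_nonneg_right h (div_nonneg (hc j) hC0)
      _ = c j := mul_div_cancel₀ _ hC

end Split

theorem val_le_val_apply_of_strictMono {m n : ℕ} {g : Fin m → Fin n} (hg : StrictMono g)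
    (j : Fin m) : (j : ℕ) ≤ g j :=
  calc (j : ℕ) = #(Iio j) := (Fin.card_Iio j).symm
    _ ≤ #(Iio (g j)) :=
      card_le_card_of_injOn g (fun i hi => by simpa using hg (by simpa using hi))
        hg.injective.injOn
    _ = g j := Fin.card_Iio (g j)

theorem filter_val_lt_eq_map_castLEEmb {m n : ℕ} (h : m ≤ n) :
    univ.filter (fun i : Fin n => (i : ℕ) < m) = univ.map (Fin.castLEEmb h) := by
  ext i
  simp only [mem_filter, mem_univ, true_and, mem_map, Fin.castLEEmb_apply]
  exact ⟨fun hi => ⟨⟨i, hi⟩, rfl⟩, by rintro ⟨j, rfl⟩; exact j.2⟩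

section Greedy

variable {β : Type*} [AddCommMonoid β] [PartialOrder β] [IsOrderedAddMonoid β]

theorem sum_filter_val_lt_card_le_sum {n : ℕ} {f : Fin n → β} (hf : Monotone f)
    (S : Finset (Fin n)) :
    ∑ i ∈ univ.filter (fun i : Fin n => (i : ℕ) < #S), f i ≤ ∑ i ∈ S, f i := by
  have hS : #S ≤ n := (card_le_univ S).trans_eq (Fintype.card_fin n)
  let g := S.orderEmbOfFin rfl
  calc ∑ i ∈ univ.filter (fun i : Fin n => (i : ℕ) < #S), f i
      = ∑ j : Fin #S, f (Fin.castLE hS j) := by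
        rw [filter_val_lt_eq_map_castLEEmb hS, sum_map]
        rfl
    _ ≤ ∑ j : Fin #S, f (g j) :=
        sum_le_sum fun j _ => hf (Fin.le_def.2 (val_le_val_apply_of_strictMono g.strictMono j))
    _ = ∑ i ∈ S, f i := by
        conv_rhs => rw [← S.map_orderEmbOfFin_univ rfl, sum_map]
        rfl

theorem sum_image_filter_val_lt_card_le_sum {R : Type*} [DecidableEq R] {n : ℕ} (e : Fin n ≃ R)
    {f : R → β} (hf : Monotone (f ∘ e)) (S : Finset R) :
    ∑ r ∈ (univ.filter (fun i : Fin n => (i : ℕ) < #S)).image e, f r ≤ ∑ r ∈ S, f r := by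
  rw [sum_image e.injective.injOn]
  calc ∑ i ∈ univ.filter (fun i : Fin n => (i : ℕ) < #S), f (e i)
      ≤ ∑ i ∈ S.map e.symm.toEmbedding, f (e i) := by
        simpa using sum_filter_val_lt_card_le_sum hf (S.map e.symm.toEmbedding)
    _ = ∑ r ∈ S, f r := by simp [sum_map]

end Greedy

theorem exists_finset_eq_indicator {R : Type*} [Fintype R] [DecidableEq R] {y : R → ℝ}
    (hy : ∀ r, y r = 0 ∨ y r = 1) : ∃ S : Finset R, y = fun r => if r ∈ S then 1 else 0 := by
  classical
  refine ⟨univ.filter (y · = 1), funext fun r => ?_⟩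
  rcases hy r with h | h <;> simp [h]

theorem Set.Finite.csSup_natCast_image {s : Set ℕ} (hne : s.Nonempty) (hfin : s.Finite) :
    sSup ((Nat.cast : ℕ → ℝ) '' s) = sSup s :=
  (hfin.map_sSup_of_monotone Nat.mono_cast hne).symm

section ESP

variable {D T R : Type*} [Fintype R] {zr : R → T} {A : D → T → T → ℝ} {ρ : D → T → ℝ} {z : T}

theorem capacity_constraints_iff (hz : ∀ r, zr r = z) (hAdiag : ∀ d, A d z z = 1)
    (hnc : ∀ d t, t ≠ z → A d z t = 0) (hρ : ∀ d t, 0 ≤ ρ d t) (σ : R → D → ℝ) :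
    (∀ t d, ∑ r, A d (zr r) t * σ r d ≤ ρ d t) ↔ ∀ d, ∑ r, σ r d ≤ ρ d z := by
  simp only [hz, ← mul_sum]
  refine ⟨fun h d => by simpa [hAdiag] using h z d, fun h t d => ?_⟩
  by_cases ht : t = z
  · subst ht
    simpa [hAdiag] using h d
  · simpa [hnc d t ht] using hρ d t

variable [Fintype D]

def espValues (zr : R → T) (A : D → T → T → ℝ) (ρ : D → T → ℝ) (τ : R → ℝ) : Set ℝ :=
  {u : ℝ | ∃ (y : R → ℝ) (σ : R → D → ℝ),
    (∀ r, y r = 0 ∨ y r = 1) ∧ (∀ r d, 0 ≤ σ r d) ∧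
    (∀ r, ∑ d, σ r d = τ r * y r) ∧
    (∀ t d, ∑ r, A d (zr r) t * σ r d ≤ ρ d t) ∧
    u = ∑ r, (1 : ℝ) * y r}

variable [DecidableEq R]

theorem exists_espFeasible_iff (hz : ∀ r, zr r = z) (hAdiag : ∀ d, A d z z = 1)
    (hnc : ∀ d t, t ≠ z → A d z t = 0) (hρ : ∀ d t, 0 ≤ ρ d t) {τ : R → ℝ}
    (hτ : ∀ r, 0 ≤ τ r) (S : Finset R) :
    (∃ σ : R → D → ℝ, (∀ r d, 0 ≤ σ r d) ∧ (∀ r, ∑ d, σ r d = τ r * if r ∈ S then 1 else 0) ∧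
      ∀ t d, ∑ r, A d (zr r) t * σ r d ≤ ρ d t) ↔ ∑ r ∈ S, τ r ≤ ∑ d, ρ d z := by
  simp_rw [capacity_constraints_iff hz hAdiag hnc hρ]
  rw [exists_split_iff_sum_le (fun r => mul_nonneg (hτ r) (by split_ifs <;> norm_num))
    (fun d => hρ d z)]
  simp only [mul_ite, mul_one, mul_zero, sum_ite_mem, univ_inter]

theorem espValues_eq_image_card (hz : ∀ r, zr r = z) (hAdiag : ∀ d, A d z z = 1)
    (hnc : ∀ d t, t ≠ z → A d z t = 0) (hρ : ∀ d t, 0 ≤ ρ d t) {τ : R → ℝ}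
    (hτ : ∀ r, 0 ≤ τ r) :
    espValues zr A ρ τ =
      (Nat.cast : ℕ → ℝ) '' {m | ∃ S : Finset R, #S = m ∧ ∑ r ∈ S, τ r ≤ ∑ d, ρ d z} := by
  ext u
  constructor
  · rintro ⟨y, σ, hy, hσ, hrow, hcap, rfl⟩
    obtain ⟨S, rfl⟩ := exists_finset_eq_indicator hy
    exact ⟨#S, ⟨S, rfl, (exists_espFeasible_iff hz hAdiag hnc hρ hτ S).1 ⟨σ, hσ, hrow, hcap⟩⟩,
      by simp⟩
  · rintro ⟨_, ⟨S, rfl, hS⟩, rfl⟩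
    obtain ⟨σ, hσ, hrow, hcap⟩ := (exists_espFeasible_iff hz hAdiag hnc hρ hτ S).2 hS
    exact ⟨_, σ, fun r => by split_ifs <;> simp, hσ, hrow, hcap, by simp⟩

end ESP

theorem esp_reduction_smkp_general
    {D T R : Type*} [Fintype D] [Fintype R] [DecidableEq R]
    (zr : R → T) (A : D → T → T → ℝ) (ρ : D → T → ℝ) (τ : R → ℝ)
    (hρ : ∀ d z, 0 ≤ ρ d z) (hAdiag : ∀ d z, A d z z = 1) (hτ : ∀ r, 0 ≤ τ r)
    (z : T) (hz : ∀ r, zr r = z) (hnc : ∀ d t, t ≠ z → A d z t = 0)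
    (M : ℕ)
    (hM : M = sSup {m : ℕ | ∃ S : Finset R, S.card = m ∧ ∑ r ∈ S, τ r ≤ ∑ d, ρ d z}) :
    sSup {u : ℝ | ∃ (y : R → ℝ) (σ : R → D → ℝ),
        (∀ r, y r = 0 ∨ y r = 1) ∧ (∀ r d, 0 ≤ σ r d) ∧
        (∀ r, ∑ d, σ r d = τ r * y r) ∧
        (∀ t d, ∑ r, A d (zr r) t * σ r d ≤ ρ d t) ∧
        u = ∑ r, (1 : ℝ) * y r} = (M : ℝ)
    ∧ (∀ e : Fin (Fintype.card R) ≃ R,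
        (∀ i j : Fin (Fintype.card R), i ≤ j → τ (e i) ≤ τ (e j)) →
        ((univ.filter (fun i : Fin (Fintype.card R) => (i : ℕ) < M)).image (fun i => e i)).card = M ∧
        ∑ r ∈ (univ.filter (fun i : Fin (Fintype.card R) => (i : ℕ) < M)).image (fun i => e i), τ r
          ≤ ∑ d, ρ d z) := by
  set N := {m : ℕ | ∃ S : Finset R, S.card = m ∧ ∑ r ∈ S, τ r ≤ ∑ d, ρ d z}
  have hne : N.Nonempty := ⟨0, ∅, rfl, by simpa using sum_nonneg fun d _ => hρ d z⟩
  have hfin : N.Finite :=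
    (Set.finite_Iic (Fintype.card R)).subset <| by rintro _ ⟨S, rfl, -⟩; exact card_le_univ S
  obtain ⟨S, hSM, hS⟩ : M ∈ N := hM ▸ hne.csSup_mem hfin
  refine ⟨?_, fun e he => ⟨?_, ?_⟩⟩
  · change sSup (espValues zr A ρ τ) = _
    rw [espValues_eq_image_card hz (fun d => hAdiag d z) hnc hρ hτ,
      hfin.csSup_natCast_image hne, hM]
  · rw [card_image_of_injective _ e.injective, Fin.card_filter_val_lt, ← hSM,
      min_eq_right (card_le_univ S)]
  · rw [← hSM]
    exact (sum_image_filter_val_lt_card_le_sum e (fun i j => he i j) S).trans hS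

/-- Theorem 1's reduction: with a single cluster, all requests of the same
type `z`, unit values, and no cross-type collateral consumption, the ESP
optimal value equals the splittable multiple knapsack optimum, i.e. the
maximum cardinality `M` of a set of requests whose total demand fits within
the total capacity; moreover admitting requests greedily in nondecreasing
order of demand attains this maximum. -/
theorem esp_reduction_smkp
    {D T R : Type*} [Fintype D] [Fintype T] [Fintype R] [DecidableEq R]
    (zr : R → T) (A : D → T → T → ℝ) (ρ : D → T → ℝ) (τ : R → ℝ)
    (hρ : ∀ d z, 0 ≤ ρ d z) (hAdiag : ∀ d z, A d z z = 1) (hτ : ∀ r, 0 ≤ τ r)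
    (z : T) (hz : ∀ r, zr r = z) (hnc : ∀ d t, t ≠ z → A d z t = 0)
    (M : ℕ)
    (hM : M = sSup {m : ℕ | ∃ S : Finset R, S.card = m ∧ ∑ r ∈ S, τ r ≤ ∑ d, ρ d z}) :
    sSup {u : ℝ | ∃ (y : R → ℝ) (σ : R → D → ℝ),
        (∀ r, y r = 0 ∨ y r = 1) ∧ (∀ r d, 0 ≤ σ r d) ∧
        (∀ r, ∑ d, σ r d = τ r * y r) ∧
        (∀ t d, ∑ r, A d (zr r) t * σ r d ≤ ρ d t) ∧
        u = ∑ r, (1 : ℝ) * y r} = (M : ℝ)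
    ∧ (∀ e : Fin (Fintype.card R) ≃ R,
        (∀ i j : Fin (Fintype.card R), i ≤ j → τ (e i) ≤ τ (e j)) →
        ((univ.filter (fun i : Fin (Fintype.card R) => (i : ℕ) < M)).image (fun i => e i)).card = M ∧
        ∑ r ∈ (univ.filter (fun i : Fin (Fintype.card R) => (i : ℕ) < M)).image (fun i => e i), τ r
          ≤ ∑ d, ρ d z) :=
  esp_reduction_smkp_general zr A ρ τ hρ hAdiag hτ z hz hnc M hM
end

section
/- Fix a cluster k ∈ K and suppose all nodes d ∈ D_k share a common collateral matrix, A_d^{t→z} = A^{t→z} for all t,z ∈ T, and have proportional capacities ρ_d^z = w_d·P^z with weights w_d > 0 summing to 1 over D_k and P^z ≥ 0. Then an admission vector y : R → {0,1} admits a nonnegative allocation σ on the nodes of D_k satisfying the ESP constraints (i) and (ii) for cluster k if and only if Σ_{r∈R} A^{z_r→z}·τ_{r,k}·y_r ≤ P^z for every type z ∈ T; moreover, when this condition holds, the proportional allocation σ_{r,d} = w_d·τ_{r,k}·y_r is feasible. -/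
/-!
Summing the capacity constraints over the cluster proves necessity: with a common collateral
matrix the node loads add up to the aggregate collateral demand, and proportional capacities add
up to `P`. Conversely, splitting every demand in the proportions `w` scales the aggregate
constraint by `w d` on each node.
-/

open Finset

section ClusterAllocation

variable {𝕜 ι R T : Type*} [CommSemiring 𝕜] [Fintype R]
  {s : Finset ι} {zr : R → T} {Anode : ι → T → T → 𝕜} {A : T → T → 𝕜}
  {cap : ι → T → 𝕜} {w : ι → 𝕜} {P : T → 𝕜} {q : R → 𝕜} {σ : R → ι → 𝕜}

theorem sum_load_eq_of_sum_eq (hA : ∀ d ∈ s, ∀ t z, Anode d t z = A t z)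
    (hσ : ∀ r, ∑ d ∈ s, σ r d = q r) (z : T) :
    ∑ d ∈ s, ∑ r, Anode d (zr r) z * σ r d = ∑ r, A (zr r) z * q r := by
  rw [sum_comm]
  refine sum_congr rfl fun r _ => ?_
  rw [← hσ r, mul_sum]
  exact sum_congr rfl fun d hd => by rw [hA d hd]

theorem sum_cap_eq (hcap : ∀ d ∈ s, ∀ z, cap d z = w d * P z)
    (hw : ∑ d ∈ s, w d = 1) (z : T) : ∑ d ∈ s, cap d z = P z := by
  rw [sum_congr rfl fun d hd => hcap d hd z, ← sum_mul, hw, one_mul]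

variable [PartialOrder 𝕜] [IsOrderedRing 𝕜]

/-- Constraints (i) and (ii) of the ESP restricted to the nodes `s` of one cluster, where `q r`
plays the role of `τ_{r,k} · y_r`. -/
def IsFeasibleAllocation (s : Finset ι) (zr : R → T) (Anode : ι → T → T → 𝕜)
    (cap : ι → T → 𝕜) (q : R → 𝕜) (σ : R → ι → 𝕜) : Prop :=
  (∀ r, ∀ d ∈ s, 0 ≤ σ r d) ∧
  (∀ r, ∑ d ∈ s, σ r d = q r) ∧
  (∀ z, ∀ d ∈ s, ∑ r, Anode d (zr r) z * σ r d ≤ cap d z)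

theorem IsFeasibleAllocation.aggregate_le (hA : ∀ d ∈ s, ∀ t z, Anode d t z = A t z)
    (hcap : ∀ d ∈ s, ∀ z, cap d z = w d * P z) (hw : ∑ d ∈ s, w d = 1)
    (hσ : IsFeasibleAllocation s zr Anode cap q σ) (z : T) :
    ∑ r, A (zr r) z * q r ≤ P z := by
  obtain ⟨-, hsum, hload⟩ := hσ
  calc ∑ r, A (zr r) z * q r = ∑ d ∈ s, ∑ r, Anode d (zr r) z * σ r d :=
        (sum_load_eq_of_sum_eq hA hsum z).symm
    _ ≤ ∑ d ∈ s, cap d z := sum_le_sum fun d hd => hload z d hd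
    _ = P z := sum_cap_eq hcap hw z

theorem isFeasibleAllocation_proportional (hA : ∀ d ∈ s, ∀ t z, Anode d t z = A t z)
    (hcap : ∀ d ∈ s, ∀ z, cap d z = w d * P z) (hw₀ : ∀ d ∈ s, 0 ≤ w d)
    (hw : ∑ d ∈ s, w d = 1) (hq : ∀ r, 0 ≤ q r)
    (hagg : ∀ z, ∑ r, A (zr r) z * q r ≤ P z) :
    IsFeasibleAllocation s zr Anode cap q fun r d => w d * q r := by
  refine ⟨fun r d hd => mul_nonneg (hw₀ d hd) (hq r), fun r => by rw [← sum_mul, hw, one_mul],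
    fun z d hd => ?_⟩
  calc ∑ r, Anode d (zr r) z * (w d * q r) = w d * ∑ r, A (zr r) z * q r := by
        rw [mul_sum]
        exact sum_congr rfl fun r _ => by rw [hA d hd]; ring
    _ ≤ w d * P z := mul_le_mul_of_nonneg_left (hagg z) (hw₀ d hd)
    _ = cap d z := (hcap d hd z).symm

theorem exists_isFeasibleAllocation_iff (hA : ∀ d ∈ s, ∀ t z, Anode d t z = A t z)
    (hcap : ∀ d ∈ s, ∀ z, cap d z = w d * P z) (hw₀ : ∀ d ∈ s, 0 ≤ w d)
    (hw : ∑ d ∈ s, w d = 1) (hq : ∀ r, 0 ≤ q r) :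
    (∃ σ, IsFeasibleAllocation s zr Anode cap q σ) ↔ ∀ z, ∑ r, A (zr r) z * q r ≤ P z :=
  ⟨fun ⟨_, hσ⟩ => hσ.aggregate_le hA hcap hw,
    fun hagg => ⟨_, isFeasibleAllocation_proportional hA hcap hw₀ hw hq hagg⟩⟩

end ClusterAllocation

theorem esp_proportional_cluster_general
    {K D T R : Type*} [Fintype D] [Fintype T] [Fintype R]
    [DecidableEq K]
    (cl : D → K) (zr : R → T) (τ : R → K → ℝ) (k : K)
    (Anode : D → T → T → ℝ) (A : T → T → ℝ)
    (hAeq : ∀ d, cl d = k → ∀ t z, Anode d t z = A t z)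
    (ρ : D → T → ℝ) (w : D → ℝ) (P : T → ℝ)
    (hw : ∀ d, cl d = k → 0 < w d)
    (hwsum : ∑ d ∈ univ.filter (fun d => cl d = k), w d = 1)
    (hρ : ∀ d, cl d = k → ∀ z, ρ d z = w d * P z)
    (hτ : ∀ r, 0 ≤ τ r k)
    (y : R → ℝ) (hy : ∀ r, y r = 0 ∨ y r = 1) :
    ((∃ σ : R → D → ℝ,
        (∀ r, ∀ d ∈ univ.filter (fun d => cl d = k), 0 ≤ σ r d) ∧
        (∀ r, ∑ d ∈ univ.filter (fun d => cl d = k), σ r d = τ r k * y r) ∧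
        (∀ z, ∀ d ∈ univ.filter (fun d => cl d = k),
          ∑ r, Anode d (zr r) z * σ r d ≤ ρ d z))
      ↔ (∀ z, ∑ r, A (zr r) z * (τ r k * y r) ≤ P z))
    ∧ ((∀ z, ∑ r, A (zr r) z * (τ r k * y r) ≤ P z) →
        ((∀ r, ∀ d ∈ univ.filter (fun d => cl d = k), 0 ≤ w d * (τ r k * y r)) ∧
         (∀ r, ∑ d ∈ univ.filter (fun d => cl d = k), w d * (τ r k * y r) = τ r k * y r) ∧
         (∀ z, ∀ d ∈ univ.filter (fun d => cl d = k),
           ∑ r, Anode d (zr r) z * (w d * (τ r k * y r)) ≤ ρ d z))) := by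
  have hA : ∀ d ∈ univ.filter (fun d => cl d = k), ∀ t z, Anode d t z = A t z :=
    fun d hd => hAeq d (mem_filter.1 hd).2
  have hcap : ∀ d ∈ univ.filter (fun d => cl d = k), ∀ z, ρ d z = w d * P z :=
    fun d hd => hρ d (mem_filter.1 hd).2
  have hw₀ : ∀ d ∈ univ.filter (fun d => cl d = k), 0 ≤ w d :=
    fun d hd => (hw d (mem_filter.1 hd).2).le
  have hq : ∀ r, 0 ≤ τ r k * y r := fun r =>
    mul_nonneg (hτ r) (by rcases hy r with h | h <;> norm_num [h])
  exact ⟨exists_isFeasibleAllocation_iff hA hcap hw₀ hwsum hq,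
    isFeasibleAllocation_proportional hA hcap hw₀ hwsum hq⟩

/-- In a cluster `k` whose nodes share a common collateral matrix `A` and
have proportional capacities `ρ d z = w d * P z`, a binary admission vector
`y` admits a feasible allocation on the cluster iff the aggregated collateral
demand of the admitted requests fits within `P z` for every type `z`;
moreover the proportional allocation `σ r d = w d * (τ r k * y r)` is then
feasible. -/
theorem esp_proportional_cluster
    {K D T R : Type*} [Fintype K] [Fintype D] [Fintype T] [Fintype R]
    [DecidableEq K]
    (cl : D → K) (zr : R → T) (τ : R → K → ℝ) (k : K)
    (Anode : D → T → T → ℝ) (A : T → T → ℝ)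
    (hAeq : ∀ d, cl d = k → ∀ t z, Anode d t z = A t z)
    (ρ : D → T → ℝ) (w : D → ℝ) (P : T → ℝ)
    (hw : ∀ d, cl d = k → 0 < w d)
    (hwsum : ∑ d ∈ univ.filter (fun d => cl d = k), w d = 1)
    (hρ : ∀ d, cl d = k → ∀ z, ρ d z = w d * P z)
    (hP : ∀ z, 0 ≤ P z)
    (hτ : ∀ r, 0 ≤ τ r k)
    (y : R → ℝ) (hy : ∀ r, y r = 0 ∨ y r = 1) :
    ((∃ σ : R → D → ℝ,
        (∀ r, ∀ d ∈ univ.filter (fun d => cl d = k), 0 ≤ σ r d) ∧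
        (∀ r, ∑ d ∈ univ.filter (fun d => cl d = k), σ r d = τ r k * y r) ∧
        (∀ z, ∀ d ∈ univ.filter (fun d => cl d = k),
          ∑ r, Anode d (zr r) z * σ r d ≤ ρ d z))
      ↔ (∀ z, ∑ r, A (zr r) z * (τ r k * y r) ≤ P z))
    ∧ ((∀ z, ∑ r, A (zr r) z * (τ r k * y r) ≤ P z) →
        ((∀ r, ∀ d ∈ univ.filter (fun d => cl d = k), 0 ≤ w d * (τ r k * y r)) ∧
         (∀ r, ∑ d ∈ univ.filter (fun d => cl d = k), w d * (τ r k * y r) = τ r k * y r) ∧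
         (∀ z, ∀ d ∈ univ.filter (fun d => cl d = k),
           ∑ r, Anode d (zr r) z * (w d * (τ r k * y r)) ≤ ρ d z))) :=
  esp_proportional_cluster_general cl zr τ k Anode A hAeq ρ w P hw hwsum hρ hτ y hy
end

section
/- (Virtual edge node split lemma, feasibility of V-ESP Step 4.) Let G be a finite nonempty set of edge nodes whose capacities are proportional, ρ_d^z = w_d·P^z with w_d > 0, Σ_{d∈G} w_d = 1 and P^z ≥ 0, and whose collateral coefficients satisfy A_d^{t→z} ≤ Â^{t→z} for all d ∈ G and t,z ∈ T, where Â is the virtual collateral matrix (e.g., the entrywise maximum over G). If a virtual allocation σ̃ : R → ℝ with σ̃ ≥ 0 satisfies the virtual-node capacity constraint Σ_{r∈R} Â^{z_r→z}·σ̃_r ≤ P^z for every type z ∈ T, then the proportional split σ_{r,d} := w_d·σ̃_r satisfies σ ≥ 0, Σ_{d∈G} σ_{r,d} = σ̃_r for every r, and Σ_{r∈R} A_d^{z_r→z}·σ_{r,d} ≤ ρ_d^z for every d ∈ G and z ∈ T. -/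
open Finset

/-!
Splitting the virtual allocation in proportion to the weights `w d` scales both sides of the
virtual capacity constraint of type `z` by `w d`, which turns its right-hand side into `ρ d z`;
since the physical collateral coefficients are dominated by the virtual ones and the allocation
is nonnegative, the physical load is at most the virtual one.
-/

lemma sum_mul_le_of_le_of_sum_mul_le {R : Type*} {s : Finset R} {a b x : R → ℝ} {p : ℝ}
    (hab : ∀ r ∈ s, a r ≤ b r) (hx : ∀ r ∈ s, 0 ≤ x r) (hb : ∑ r ∈ s, b r * x r ≤ p) :
    ∑ r ∈ s, a r * x r ≤ p :=
  calc ∑ r ∈ s, a r * x r ≤ ∑ r ∈ s, b r * x r :=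
        sum_le_sum fun r hr => mul_le_mul_of_nonneg_right (hab r hr) (hx r hr)
    _ ≤ p := hb

lemma sum_mul_const_mul_le {R : Type*} {s : Finset R} {a x : R → ℝ} {c p : ℝ} (hc : 0 ≤ c)
    (h : ∑ r ∈ s, a r * x r ≤ p) : ∑ r ∈ s, a r * (c * x r) ≤ c * p := by
  calc ∑ r ∈ s, a r * (c * x r) = c * ∑ r ∈ s, a r * x r := by
        rw [mul_sum]
        exact sum_congr rfl fun r _ => by ring
    _ ≤ c * p := mul_le_mul_of_nonneg_left h hc

theorem vesp_virtual_node_split_general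
    {G T R : Type*} [Fintype G] [Fintype R]
    (zr : R → T) (A : G → T → T → ℝ) (Ahat : T → T → ℝ)
    (ρ : G → T → ℝ) (w : G → ℝ) (P : T → ℝ)
    (hw : ∀ d, 0 < w d) (hwsum : ∑ d, w d = 1)
    (hρ : ∀ d z, ρ d z = w d * P z)
    (hA : ∀ d t z, A d t z ≤ Ahat t z)
    (σt : R → ℝ) (hσt : ∀ r, 0 ≤ σt r)
    (hcap : ∀ z, ∑ r, Ahat (zr r) z * σt r ≤ P z) :
    (∀ r d, 0 ≤ w d * σt r) ∧
    (∀ r, ∑ d, w d * σt r = σt r) ∧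
    (∀ d z, ∑ r, A d (zr r) z * (w d * σt r) ≤ ρ d z) := by
  refine ⟨fun r d => mul_nonneg (hw d).le (hσt r),
    fun r => by rw [← sum_mul, hwsum, one_mul], fun d z => ?_⟩
  have hload : ∑ r, A d (zr r) z * σt r ≤ P z :=
    sum_mul_le_of_le_of_sum_mul_le (fun r _ => hA d _ _) (fun r _ => hσt r) (hcap z)
  rw [hρ]
  exact sum_mul_const_mul_le (hw d).le hload

/-- Virtual edge node split lemma (feasibility of V-ESP Step 4): if a
nonnegative virtual allocation `σt` satisfies the virtual-node capacity
constraints with the virtual collateral matrix `Ahat` (entrywise dominating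
the physical matrices), then the proportional split `σ r d = w d * σt r`
over a group `G` of nodes with proportional capacities `ρ d z = w d * P z`
is nonnegative, adds up to `σt`, and satisfies every physical node's
capacity constraints. -/
theorem vesp_virtual_node_split
    {G T R : Type*} [Fintype G] [Fintype T] [Fintype R] [Nonempty G]
    (zr : R → T) (A : G → T → T → ℝ) (Ahat : T → T → ℝ)
    (ρ : G → T → ℝ) (w : G → ℝ) (P : T → ℝ)
    (hA0 : ∀ d t z, 0 ≤ A d t z) (hAdiag : ∀ d z, A d z z = 1)
    (hw : ∀ d, 0 < w d) (hwsum : ∑ d, w d = 1)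
    (hρ : ∀ d z, ρ d z = w d * P z) (hP : ∀ z, 0 ≤ P z)
    (hA : ∀ d t z, A d t z ≤ Ahat t z)
    (σt : R → ℝ) (hσt : ∀ r, 0 ≤ σt r)
    (hcap : ∀ z, ∑ r, Ahat (zr r) z * σt r ≤ P z) :
    (∀ r d, 0 ≤ w d * σt r) ∧
    (∀ r, ∑ d, w d * σt r = σt r) ∧
    (∀ d z, ∑ r, A d (zr r) z * (w d * σt r) ≤ ρ d z) :=
  vesp_virtual_node_split_general zr A Ahat ρ w P hw hwsum hρ hA σt hσt hcap
end

section
/- (Per-cluster decomposition of the augmented Lagrangian, justifying the DC-ESP subproblem.) Fix a cluster k₀ ∈ K and suppose y_{r,k₀} ∈ {0,1} for all r ∈ R. Then the augmented Lagrangian decomposes as L(y,λ,ρ) = Σ_{r∈R} c_r·y_{r,k₀} + C, where the constant C does not depend on the variables (y_{r,k₀})_{r∈R}, and the adjusted coefficient is c_r = v_r − Σ_{m∈K, m≠k₀} (λ_{r,k₀,m} − λ_{r,m,k₀}) + 2ρ·Σ_{m∈K, m≠k₀} y_{r,m} − ρ·(|K| − 1). Consequently, maximizing L over cluster k₀'s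 binary admission variables (with all other clusters' variables and the duals held fixed) is equivalent to maximizing the linear objective Σ_{r∈R} c_r·y_{r,k₀}. -/
/-!
Summing over requests, `L` splits into one term per request `r`, and only the pairs `(k, m)` with
exactly one of `k, m` equal to `k₀` involve `t = y_{r,k₀}`. In each such term `t` enters the value
and the dual part linearly and the penalty through `2 Σ_{m ≠ k₀} (t - y_{r,m})²`, so the term is a
quadratic polynomial in `t` with leading coefficient `-ρ (|K| - 1)`. For binary `t` we have
`t² = t`, which moves that coefficient into the linear one and produces `c_r`.
-/

open Finset

/-- The augmented Lagrangian of D-ESP. -/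
noncomputable def augLagrangian {K R : Type*} [Fintype K] [Fintype R]
    (v : R → ℝ) (Y : R → K → ℝ) (lam : R → K → K → ℝ) (ρ : ℝ) : ℝ :=
  (∑ k, ∑ r, v r * Y r k)
    - (∑ r, ∑ k, ∑ m, lam r k m * (Y r k - Y r m))
    - (ρ / 2) * (∑ r, ∑ k, ∑ m, (Y r k - Y r m) ^ 2)

noncomputable def requestLagrangian {K : Type*} [Fintype K]
    (v : ℝ) (x : K → ℝ) (lam : K → K → ℝ) (ρ : ℝ) : ℝ :=
  (∑ k, v * x k) - (∑ k, ∑ m, lam k m * (x k - x m)) - (ρ / 2) * (∑ k, ∑ m, (x k - x m) ^ 2)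

theorem augLagrangian_eq_sum_requestLagrangian {K R : Type*} [Fintype K] [Fintype R]
    (v : R → ℝ) (Y : R → K → ℝ) (lam : R → K → K → ℝ) (ρ : ℝ) :
    augLagrangian v Y lam ρ = ∑ r, requestLagrangian (v r) (Y r) (lam r) ρ := by
  simp only [augLagrangian, requestLagrangian, sum_sub_distrib, mul_sum]
  rw [sum_comm]

/-- The paper's `c_r` for cluster `k₀`, where `x` holds request `r`'s admission variables
(only those of the other clusters enter). -/
noncomputable def adjustedCoeff {K : Type*} [Fintype K] [DecidableEq K]
    (v : ℝ) (x : K → ℝ) (lam : K → K → ℝ) (ρ : ℝ) (k₀ : K) : ℝ :=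
  v - (∑ m ∈ univ.erase k₀, (lam k₀ m - lam m k₀)) + 2 * ρ * (∑ m ∈ univ.erase k₀, x m)
    - ρ * ((Fintype.card K : ℝ) - 1)

section AddSingle

variable {K : Type*} [Fintype K] [DecidableEq K]

theorem sum_mul_add_single (v : ℝ) (x : K → ℝ) (k₀ : K) (t : ℝ) :
    ∑ k, v * (x + Pi.single k₀ t : K → ℝ) k = ∑ k, v * x k + v * t := by
  simp [mul_add, sum_add_distrib, Pi.single_apply]

theorem sum_sum_mul_sub_add_single (lam : K → K → ℝ) (x : K → ℝ) (k₀ : K) (t : ℝ) :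
    ∑ k, ∑ m, lam k m * ((x + Pi.single k₀ t : K → ℝ) k - (x + Pi.single k₀ t : K → ℝ) m)
      = ∑ k, ∑ m, lam k m * (x k - x m) + t * ∑ m, (lam k₀ m - lam m k₀) := by
  simp [add_sub_add_comm, mul_add, mul_sub, sum_add_distrib, sum_sub_distrib, Pi.single_apply,
    ← sum_mul, mul_comm t, sub_mul]

theorem sum_sum_sq_sub_add_single (x : K → ℝ) (k₀ : K) (t : ℝ) :
    ∑ k, ∑ m, ((x + Pi.single k₀ t : K → ℝ) k - (x + Pi.single k₀ t : K → ℝ) m) ^ 2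
      = ∑ k, ∑ m, (x k - x m) ^ 2 + 4 * t * ∑ m, (x k₀ - x m)
        + 2 * ((Fintype.card K : ℝ) - 1) * t ^ 2 := by
  simp [add_sub_add_comm, add_sq, sum_add_distrib, Pi.single_apply, sub_sq, mul_sub, sub_mul,
    sum_sub_distrib, ite_pow, ← mul_sum, ← sum_mul, mul_ite]
  ring

theorem requestLagrangian_add_single (v : ℝ) (x : K → ℝ) (lam : K → K → ℝ) (ρ : ℝ) (k₀ : K)
    (t : ℝ) :
    requestLagrangian v (x + Pi.single k₀ t) lam ρ
      = requestLagrangian v x lam ρ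
        + (v - ∑ m, (lam k₀ m - lam m k₀) - 2 * ρ * ∑ m, (x k₀ - x m)) * t
        - ρ * ((Fintype.card K : ℝ) - 1) * t ^ 2 := by
  simp only [requestLagrangian, sum_mul_add_single, sum_sum_mul_sub_add_single,
    sum_sum_sq_sub_add_single]
  ring

theorem requestLagrangian_ite (v : ℝ) (x : K → ℝ) (lam : K → K → ℝ) (ρ : ℝ) (k₀ : K) (t : ℝ) :
    requestLagrangian v (fun k => if k = k₀ then t else x k) lam ρ
      = requestLagrangian v (fun k => if k = k₀ then 0 else x k) lam ρ
        + adjustedCoeff v x lam ρ k₀ * t - ρ * ((Fintype.card K : ℝ) - 1) * (t ^ 2 - t) := by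
  have hx : (fun k => if k = k₀ then t else x k)
      = (fun k => if k = k₀ then 0 else x k) + Pi.single k₀ t := by
    ext k
    by_cases hk : k = k₀ <;> simp [hk]
  have hlam : ∑ m, (lam k₀ m - lam m k₀) = ∑ m ∈ univ.erase k₀, (lam k₀ m - lam m k₀) :=
    (sum_erase _ (sub_self _)).symm
  have hdiff : ∑ m, ((if k₀ = k₀ then 0 else x k₀) - if m = k₀ then 0 else x m)
      = -∑ m ∈ univ.erase k₀, x m := by
    simp [sum_ite, filter_ne', sum_neg_distrib]
  rw [hx, requestLagrangian_add_single, hlam, hdiff, adjustedCoeff]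
  ring

end AddSingle

theorem augLagrangian_ite {K R : Type*} [Fintype K] [Fintype R] [DecidableEq K]
    (v : R → ℝ) (lam : R → K → K → ℝ) (ρ : ℝ) (k₀ : K) (y : R → K → ℝ) (u : R → ℝ) :
    augLagrangian v (fun r k => if k = k₀ then u r else y r k) lam ρ
      = augLagrangian v (fun r k => if k = k₀ then 0 else y r k) lam ρ
        + ∑ r, adjustedCoeff (v r) (y r) (lam r) ρ k₀ * u r
        - ρ * ((Fintype.card K : ℝ) - 1) * ∑ r, (u r ^ 2 - u r) := by
  rw [augLagrangian_eq_sum_requestLagrangian, augLagrangian_eq_sum_requestLagrangian, mul_sum,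
    ← sum_add_distrib, ← sum_sub_distrib]
  exact sum_congr rfl fun r _ => requestLagrangian_ite (v r) (y r) (lam r) ρ k₀ (u r)

theorem dcesp_per_cluster_decomposition_general
    {K R : Type*} [Fintype K] [Fintype R] [DecidableEq K]
    (v : R → ℝ)
    (lam : R → K → K → ℝ) (ρ : ℝ)
    (ν₀ : K) (y : R → K → ℝ) (c : R → ℝ)
    (hc : ∀ r, c r = v r - (∑ m ∈ univ.erase ν₀, (lam r ν₀ m - lam r m ν₀))
        + 2 * ρ * (∑ m ∈ univ.erase ν₀, y r m)
        - ρ * ((Fintype.card K : ℝ) - 1)) :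
    (∃ C : ℝ, ∀ u : R → ℝ, (∀ r, u r = 0 ∨ u r = 1) →
      augLagrangian v (fun r k => if k = ν₀ then u r else y r k) lam ρ
        = (∑ r, c r * u r) + C)
    ∧
    (∀ u u' : R → ℝ, (∀ r, u r = 0 ∨ u r = 1) → (∀ r, u' r = 0 ∨ u' r = 1) →
      (augLagrangian v (fun r k => if k = ν₀ then u' r else y r k) lam ρ
        ≤ augLagrangian v (fun r k => if k = ν₀ then u r else y r k) lam ρ
        ↔ (∑ r, c r * u' r) ≤ (∑ r, c r * u r))) := by
  have hcoeff : ∀ r, c r = adjustedCoeff (v r) (y r) (lam r) ρ ν₀ := hc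
  have hbinary : ∀ u : R → ℝ, (∀ r, u r = 0 ∨ u r = 1) →
      augLagrangian v (fun r k => if k = ν₀ then u r else y r k) lam ρ
        = (∑ r, c r * u r) + augLagrangian v (fun r k => if k = ν₀ then 0 else y r k) lam ρ := by
    intro u hu
    have hsq : ∀ r, u r ^ 2 - u r = 0 := fun r => by rcases hu r with h | h <;> simp [h]
    rw [augLagrangian_ite, sum_eq_zero fun r _ => hsq r, mul_zero, sub_zero, add_comm]
    simp only [hcoeff]
  refine ⟨⟨_, hbinary⟩, fun u u' hu hu' => ?_⟩
  rw [hbinary u hu, hbinary u' hu']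
  exact add_le_add_iff_right _

/-- Per-cluster decomposition of the augmented Lagrangian, justifying the
DC-ESP subproblem: with all other clusters' variables and the duals fixed,
the augmented Lagrangian is, for binary admission variables of cluster `k₀`,
a linear function `Σ_r c_r · u_r + C` with the stated adjusted coefficients
`c_r`; hence maximizing it over cluster `k₀`'s binary variables is equivalent
to maximizing the linear objective. -/
theorem dcesp_per_cluster_decomposition
    {K R : Type*} [Fintype K] [Fintype R] [DecidableEq K]
    (v : R → ℝ) (hv : ∀ r, 0 < v r)
    (lam : R → K → K → ℝ) (ρ : ℝ) (hρ : 0 < ρ)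
    (ν₀ : K) (y : R → K → ℝ) (c : R → ℝ)
    (hc : ∀ r, c r = v r - (∑ m ∈ univ.erase ν₀, (lam r ν₀ m - lam r m ν₀))
        + 2 * ρ * (∑ m ∈ univ.erase ν₀, y r m)
        - ρ * ((Fintype.card K : ℝ) - 1)) :
    (∃ C : ℝ, ∀ u : R → ℝ, (∀ r, u r = 0 ∨ u r = 1) →
      augLagrangian v (fun r k => if k = ν₀ then u r else y r k) lam ρ
        = (∑ r, c r * u r) + C)
    ∧
    (∀ u u' : R → ℝ, (∀ r, u r = 0 ∨ u r = 1) → (∀ r, u' r = 0 ∨ u' r = 1) →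
      (augLagrangian v (fun r k => if k = ν₀ then u' r else y r k) lam ρ
        ≤ augLagrangian v (fun r k => if k = ν₀ then u r else y r k) lam ρ
        ↔ (∑ r, c r * u' r) ≤ (∑ r, c r * u r))) :=
  dcesp_per_cluster_decomposition_general v lam ρ ν₀ y c hc
end
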